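/- Let γ > 2 and B > 0. Let χ₊ : ℝ → [0,1] be measurable with χ₊(y) = 0 for y ≤ −1, and let m : ℝ × ℝ → ℂ be continuously differentiable in k with |m(y,k) − 1| ≤ B ⟨y⟩^{1−γ} ⟨k⟩^{-1} and |∂_k m(y,k)| ≤ B ⟨y⟩^{2−γ} ⟨k⟩^{-1} for all y ≥ −1 and all k ∈ ℝ. For φ ∈ L¹(ℝ) define (Aφ)(k) := ∫_ℝ conj(m(y,k) − 1) e^{−iyk} χ₊(y) φ(y) dy. Then Aφ is continuously differentiable in k, and there is a constant C depending only on γ such that ‖Aφ‖_{L²(ℝ)} + ‖(Aφ)′‖_{L²(ℝ)} ≤ C B ‖φ‖_{L¹(ℝ)}. -/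

import Mathlib

open MeasureTheory Filter Complex

noncomputable section

/-- The weight `⟨k⟩⁻¹`. -/
def KW (k : ℝ) : ℝ := (Real.sqrt (1 + k ^ 2))⁻¹

lemma one_le_sqrt_one_add_sq (y : ℝ) : 1 ≤ Real.sqrt (1 + y ^ 2) := by
  have h := Real.sqrt_le_sqrt (show (1:ℝ) ≤ 1 + y ^ 2 by nlinarith)
  simpa using h

lemma abs_le_sqrt_one_add_sq (y : ℝ) : |y| ≤ Real.sqrt (1 + y ^ 2) := by
  have h := Real.sqrt_le_sqrt (show y ^ 2 ≤ 1 + y ^ 2 by nlinarith)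
  simpa [Real.sqrt_sq_eq_abs] using h

lemma KW_nonneg (k : ℝ) : 0 ≤ KW k := by
  unfold KW; positivity

lemma KW_le_one (k : ℝ) : KW k ≤ 1 := by
  unfold KW
  rw [inv_le_one_iff₀]
  right
  exact one_le_sqrt_one_add_sq k

lemma KW_memLp : MemLp KW 2 (volume : Measure ℝ) := by
  have hcont : Continuous KW := by
    apply Continuous.inv₀
    · exact Real.continuous_sqrt.comp (by continuity)
    · intro k
      exact ne_of_gt (lt_of_lt_of_le one_pos (one_le_sqrt_one_add_sq k))
  rw [memLp_two_iff_integrable_sq hcont.aestronglyMeasurable]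
  have : (fun k : ℝ => KW k ^ 2) = fun k : ℝ => (1 + k ^ 2)⁻¹ := by
    funext k
    rw [KW, inv_pow, Real.sq_sqrt (by positivity)]
  rw [this]
  exact integrable_inv_one_add_sq

lemma rpow_le_one_of_nonpos {x t : ℝ} (hx : 1 ≤ x) (ht : t ≤ 0) : x ^ t ≤ 1 :=
  Real.rpow_le_one_of_one_le_of_nonpos hx ht

/-- L² bound from a pointwise `⟨k⟩⁻¹` bound. -/
lemma l2_of_weight_bound (f : ℝ → ℂ) (c : ℝ) (hc : 0 ≤ c)
    (h : ∀ k, ‖f k‖ ≤ c * KW k) :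
    (eLpNorm f 2 (volume : Measure ℝ)).toReal ≤ c * (eLpNorm KW 2 (volume : Measure ℝ)).toReal := by
  have h1 : eLpNorm f 2 volume ≤ eLpNorm (c • KW) 2 volume := by
    apply eLpNorm_mono
    intro k
    have : ‖(c • KW) k‖ = c * KW k := by
      simp [Real.norm_eq_abs, _root_.abs_of_nonneg hc, _root_.abs_of_nonneg (KW_nonneg k)]
    rw [this]
    exact h k
  rw [eLpNorm_const_smul] at h1
  have hfin : (‖c‖₊ : ENNReal) * eLpNorm KW 2 volume ≠ ⊤ :=
    ENNReal.mul_ne_top (by simp) KW_memLp.2.ne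
  calc (eLpNorm f 2 volume).toReal ≤ ((‖c‖₊ : ENNReal) * eLpNorm KW 2 volume).toReal :=
        ENNReal.toReal_mono hfin h1
    _ = c * (eLpNorm KW 2 volume).toReal := by
        rw [ENNReal.toReal_mul]
        simp [Real.norm_eq_abs, _root_.abs_of_nonneg hc]


/-- The kernel of the operator `A`. -/
def gker (χ : ℝ → ℝ) (m : ℝ → ℝ → ℂ) (φ : ℝ → ℂ) (k y : ℝ) : ℂ :=
  (starRingEnd ℂ) (m y k - 1) * Complex.exp (-(Complex.I * (y : ℂ) * (k : ℂ))) * (χ y : ℂ) * φ y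

/-- The k-derivative of the kernel of `A` (with a junk value for `y < -1`). -/
def gker' (χ : ℝ → ℝ) (m : ℝ → ℝ → ℂ) (φ : ℝ → ℂ) (k y : ℝ) : ℂ :=
  ((starRingEnd ℂ) (if -1 ≤ y then deriv (m y) k else 0) -
      Complex.I * (y : ℂ) * (starRingEnd ℂ) (m y k - 1)) *
    Complex.exp (-(Complex.I * (y : ℂ) * (k : ℂ))) * (χ y : ℂ) * φ y

lemma norm_cexp_line (y k : ℝ) : ‖Complex.exp (-(Complex.I * (y : ℂ) * (k : ℂ)))‖ = 1 := by
  rw [Complex.norm_exp]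
  have : (-(Complex.I * (y : ℂ) * (k : ℂ))).re = 0 := by simp
  rw [this, Real.exp_zero]

/-- Measurability in `y` of the truncated derivative. -/
lemma measurable_Dm (m : ℝ → ℝ → ℂ) (hm : Measurable (Function.uncurry m))
    (hd : ∀ y : ℝ, -1 ≤ y → ContDiff ℝ 1 (m y)) (k : ℝ) :
    Measurable (fun y : ℝ => if -1 ≤ y then deriv (m y) k else 0) := by
  have hmc : ∀ c : ℝ, Measurable (fun y => m y c) := fun c =>
    hm.comp (measurable_id.prodMk measurable_const)
  have hfmeas : ∀ n : ℕ, Measurable (fun y : ℝ =>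
      if -1 ≤ y then ((((n : ℝ) + 1) : ℝ) : ℂ) * (m y (k + ((n : ℝ) + 1)⁻¹) - m y k) else 0) :=
    fun n => Measurable.ite measurableSet_Ici
      (measurable_const.mul ((hmc _).sub (hmc _))) measurable_const
  apply measurable_of_tendsto_metrizable hfmeas
  rw [tendsto_pi_nhds]
  intro y
  by_cases hy : -1 ≤ y
  · simp only [if_pos hy]
    have hder : HasDerivAt (m y) (deriv (m y) k) k :=
      (((hd y hy).differentiable one_ne_zero) k).hasDerivAt
    have hslope := hasDerivAt_iff_tendsto_slope.mp hder
    have hpos : ∀ n : ℕ, (0 : ℝ) < ((n : ℝ) + 1)⁻¹ := fun n => by positivity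
    have hseq : Tendsto (fun n : ℕ => k + ((n : ℝ) + 1)⁻¹) atTop (nhdsWithin k {k}ᶜ) := by
      apply tendsto_nhdsWithin_of_tendsto_nhds_of_eventually_within
      · have h0 : Tendsto (fun n : ℕ => ((n : ℝ) + 1)⁻¹) atTop (nhds 0) := by
          simpa [one_div] using tendsto_one_div_add_atTop_nhds_zero_nat (𝕜 := ℝ)
        simpa using tendsto_const_nhds.add h0
      · filter_upwards with n
        simp only [Set.mem_compl_iff, Set.mem_singleton_iff]
        have := hpos n
        intro h
        nlinarith [hpos n]
    have := hslope.comp hseq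
    convert this using 1
    funext n
    have hne : ((n : ℝ) + 1)⁻¹ ≠ 0 := ne_of_gt (hpos n)
    simp only [Function.comp_apply, slope_def_module, add_sub_cancel_left, inv_inv]
    rw [Complex.real_smul]
  · simp only [if_neg hy]
    exact tendsto_const_nhds



/-- Pointwise differentiation of the kernel in `k`. -/
lemma gker_hasDerivAt (χ : ℝ → ℝ) (m : ℝ → ℝ → ℂ) (φ : ℝ → ℂ)
    (hχ0 : ∀ y, y ≤ -1 → χ y = 0) (hd : ∀ y : ℝ, -1 ≤ y → ContDiff ℝ 1 (m y))
    (k y : ℝ) : HasDerivAt (fun k => gker χ m φ k y) (gker' χ m φ k y) k := by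
  by_cases hy : -1 ≤ y
  · have hm' : HasDerivAt (m y) (deriv (m y) k) k :=
      (((hd y hy).differentiable one_ne_zero) k).hasDerivAt
    have h1 : HasDerivAt (fun k => (starRingEnd ℂ) (m y k - 1))
        ((starRingEnd ℂ) (deriv (m y) k)) k := by
      exact (hm'.sub_const 1).star
    have hlin : HasDerivAt (fun k : ℝ => -(Complex.I * (y : ℂ) * (k : ℂ)))
        (-(Complex.I * (y : ℂ))) k := by
      have hofReal : HasDerivAt (fun k : ℝ => (k : ℂ)) 1 k := by
        simpa using (hasDerivAt_id k).ofReal_comp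
      have := (hofReal.const_mul (Complex.I * (y : ℂ))).neg
      rw [mul_one] at this
      exact this
    have h2 : HasDerivAt (fun k : ℝ => Complex.exp (-(Complex.I * (y : ℂ) * (k : ℂ))))
        (Complex.exp (-(Complex.I * (y : ℂ) * (k : ℂ))) * (-(Complex.I * (y : ℂ)))) k :=
      hlin.cexp
    have h3 := ((h1.mul h2).mul_const ((χ y : ℂ))).mul_const (φ y)
    have heq : ((starRingEnd ℂ) (deriv (m y) k) * Complex.exp (-(Complex.I * (y : ℂ) * (k : ℂ))) +
          (starRingEnd ℂ) (m y k - 1) *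
            (Complex.exp (-(Complex.I * (y : ℂ) * (k : ℂ))) * (-(Complex.I * (y : ℂ))))) *
          (χ y : ℂ) * φ y = gker' χ m φ k y := by
      rw [gker', if_pos hy]; ring
    rw [← heq]
    exact h3
  · have h0 : χ y = 0 := hχ0 y (le_of_lt (not_le.mp hy))
    have hfun : (fun k : ℝ => gker χ m φ k y) = fun _ => 0 := by
      funext k'; simp [gker, h0]
    have hval : gker' χ m φ k y = 0 := by simp [gker', h0]
    rw [hfun, hval]
    exact hasDerivAt_const k 0


section bounds
variable (γ B : ℝ) (hγ : 2 < γ) (hB : 0 ≤ B) (χ : ℝ → ℝ) (m : ℝ → ℝ → ℂ) (φ : ℝ → ℂ)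
  (hχ01 : ∀ y, χ y ∈ Set.Icc (0:ℝ) 1) (hχ0 : ∀ y, y ≤ -1 → χ y = 0)

include hγ hB hχ01 hχ0

set_option linter.unusedSectionVars false in
lemma norm_chi_le (y : ℝ) : ‖((χ y : ℂ))‖ ≤ 1 := by
  rw [Complex.norm_real, Real.norm_eq_abs, _root_.abs_of_nonneg (hχ01 y).1]
  exact (hχ01 y).2

lemma gker_norm_le
    (hm1 : ∀ y k : ℝ, -1 ≤ y →
      ‖m y k - 1‖ ≤ B * Real.sqrt (1 + y ^ 2) ^ (1 - γ) * (Real.sqrt (1 + k ^ 2))⁻¹)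
    (k y : ℝ) : ‖gker χ m φ k y‖ ≤ B * KW k * ‖φ y‖ := by
  by_cases hy : -1 ≤ y
  · have h1 : ‖m y k - 1‖ ≤ B * KW k := by
      refine (hm1 y k hy).trans ?_
      have hr : Real.sqrt (1 + y ^ 2) ^ (1 - γ) ≤ 1 :=
        Real.rpow_le_one_of_one_le_of_nonpos (one_le_sqrt_one_add_sq y) (by linarith)
      calc B * Real.sqrt (1 + y ^ 2) ^ (1 - γ) * (Real.sqrt (1 + k ^ 2))⁻¹
          ≤ B * 1 * (Real.sqrt (1 + k ^ 2))⁻¹ := by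
            apply mul_le_mul_of_nonneg_right _ (KW_nonneg k)
            exact mul_le_mul_of_nonneg_left hr hB
        _ = B * KW k := by rw [KW]; ring
    rw [gker]
    rw [norm_mul, norm_mul, norm_mul, RCLike.norm_conj, norm_cexp_line]
    calc ‖m y k - 1‖ * 1 * ‖((χ y : ℂ))‖ * ‖φ y‖
        ≤ (B * KW k) * 1 * 1 * ‖φ y‖ := by
          apply mul_le_mul_of_nonneg_right _ (norm_nonneg _)
          apply mul_le_mul (by simpa using h1) (norm_chi_le γ B hγ hB χ hχ01 hχ0 y)
            (norm_nonneg _) (by have := KW_nonneg k; positivity)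
      _ = B * KW k * ‖φ y‖ := by ring
  · have h0 : χ y = 0 := hχ0 y (le_of_lt (not_le.mp hy))
    have : gker χ m φ k y = 0 := by simp [gker, h0]
    rw [this, norm_zero]
    have := KW_nonneg k
    positivity

lemma gker'_norm_le
    (hm1 : ∀ y k : ℝ, -1 ≤ y →
      ‖m y k - 1‖ ≤ B * Real.sqrt (1 + y ^ 2) ^ (1 - γ) * (Real.sqrt (1 + k ^ 2))⁻¹)
    (hm2 : ∀ y k : ℝ, -1 ≤ y →
      ‖deriv (m y) k‖ ≤ B * Real.sqrt (1 + y ^ 2) ^ (2 - γ) * (Real.sqrt (1 + k ^ 2))⁻¹)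
    (k y : ℝ) : ‖gker' χ m φ k y‖ ≤ 2 * B * KW k * ‖φ y‖ := by
  by_cases hy : -1 ≤ y
  · have hs1 : (1:ℝ) ≤ Real.sqrt (1 + y ^ 2) := one_le_sqrt_one_add_sq y
    have hspos : (0:ℝ) < Real.sqrt (1 + y ^ 2) := lt_of_lt_of_le one_pos hs1
    have hr2 : Real.sqrt (1 + y ^ 2) ^ (2 - γ) ≤ 1 :=
      Real.rpow_le_one_of_one_le_of_nonpos hs1 (by linarith)
    -- |y| * ⟨y⟩^(1-γ) ≤ ⟨y⟩^(2-γ)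
    have hmulpow : |y| * Real.sqrt (1 + y ^ 2) ^ (1 - γ) ≤ Real.sqrt (1 + y ^ 2) ^ (2 - γ) := by
      have h1 : |y| * Real.sqrt (1 + y ^ 2) ^ (1 - γ)
          ≤ Real.sqrt (1 + y ^ 2) * Real.sqrt (1 + y ^ 2) ^ (1 - γ) :=
        mul_le_mul_of_nonneg_right (abs_le_sqrt_one_add_sq y) (le_of_lt (Real.rpow_pos_of_pos hspos _))
      refine h1.trans_eq ?_
      calc Real.sqrt (1 + y ^ 2) * Real.sqrt (1 + y ^ 2) ^ (1 - γ)
          = Real.sqrt (1 + y ^ 2) ^ (1:ℝ) * Real.sqrt (1 + y ^ 2) ^ (1 - γ) := by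
            rw [Real.rpow_one]
        _ = Real.sqrt (1 + y ^ 2) ^ ((1:ℝ) + (1 - γ)) := (Real.rpow_add hspos _ _).symm
        _ = Real.sqrt (1 + y ^ 2) ^ (2 - γ) := by rw [show (1:ℝ) + (1 - γ) = 2 - γ by ring]
    have hD : ‖(starRingEnd ℂ) (if -1 ≤ y then deriv (m y) k else 0) -
        Complex.I * (y : ℂ) * (starRingEnd ℂ) (m y k - 1)‖ ≤ 2 * B * KW k := by
      rw [if_pos hy]
      have hA : ‖(starRingEnd ℂ) (deriv (m y) k)‖ ≤ B * KW k := by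
        rw [RCLike.norm_conj]
        refine (hm2 y k hy).trans ?_
        rw [KW]
        calc B * Real.sqrt (1 + y ^ 2) ^ (2 - γ) * (Real.sqrt (1 + k ^ 2))⁻¹
            ≤ B * 1 * (Real.sqrt (1 + k ^ 2))⁻¹ := by
              apply mul_le_mul_of_nonneg_right _ (KW_nonneg k)
              exact mul_le_mul_of_nonneg_left hr2 hB
          _ = B * (Real.sqrt (1 + k ^ 2))⁻¹ := by ring
      have hB2 : ‖Complex.I * (y : ℂ) * (starRingEnd ℂ) (m y k - 1)‖ ≤ B * KW k := by
        rw [norm_mul, norm_mul, Complex.norm_I, one_mul, RCLike.norm_conj, Complex.norm_real,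
          Real.norm_eq_abs]
        refine le_trans (mul_le_mul_of_nonneg_left (hm1 y k hy) (abs_nonneg y)) ?_
        rw [KW]
        calc |y| * (B * Real.sqrt (1 + y ^ 2) ^ (1 - γ) * (Real.sqrt (1 + k ^ 2))⁻¹)
            = B * (|y| * Real.sqrt (1 + y ^ 2) ^ (1 - γ)) * (Real.sqrt (1 + k ^ 2))⁻¹ := by ring
          _ ≤ B * (Real.sqrt (1 + y ^ 2) ^ (2 - γ)) * (Real.sqrt (1 + k ^ 2))⁻¹ := by
              apply mul_le_mul_of_nonneg_right _ (KW_nonneg k)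
              exact mul_le_mul_of_nonneg_left hmulpow hB
          _ ≤ B * 1 * (Real.sqrt (1 + k ^ 2))⁻¹ := by
              apply mul_le_mul_of_nonneg_right _ (KW_nonneg k)
              exact mul_le_mul_of_nonneg_left hr2 hB
          _ = B * (Real.sqrt (1 + k ^ 2))⁻¹ := by ring
      calc ‖(starRingEnd ℂ) (deriv (m y) k) - Complex.I * (y : ℂ) * (starRingEnd ℂ) (m y k - 1)‖
          ≤ ‖(starRingEnd ℂ) (deriv (m y) k)‖ + ‖Complex.I * (y : ℂ) * (starRingEnd ℂ) (m y k - 1)‖ :=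
            norm_sub_le _ _
        _ ≤ B * KW k + B * KW k := add_le_add hA hB2
        _ = 2 * B * KW k := by ring
    rw [gker']
    rw [norm_mul, norm_mul, norm_mul, norm_cexp_line]
    calc ‖_‖ * 1 * ‖((χ y : ℂ))‖ * ‖φ y‖
        ≤ (2 * B * KW k) * 1 * 1 * ‖φ y‖ := by
          apply mul_le_mul_of_nonneg_right _ (norm_nonneg _)
          apply mul_le_mul (by simpa using hD) (norm_chi_le γ B hγ hB χ hχ01 hχ0 y)
            (norm_nonneg _) (by have := KW_nonneg k; positivity)
      _ = 2 * B * KW k * ‖φ y‖ := by ring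
  · have h0 : χ y = 0 := hχ0 y (le_of_lt (not_le.mp hy))
    have : gker' χ m φ k y = 0 := by simp [gker', h0]
    rw [this, norm_zero]
    have := KW_nonneg k
    positivity

end bounds
/-- L¹ → L² bounds for the kernel correction `A` to the flat Fourier transform
and its k-derivative (key step in Lemma 2.6). -/
theorem kernel_correction_L1_to_L2 (γ : ℝ) (hγ : 2 < γ) :
    ∃ C : ℝ, 0 < C ∧
      ∀ (B : ℝ), 0 ≤ B →
      ∀ (χ : ℝ → ℝ) (m : ℝ → ℝ → ℂ),
        Measurable χ → (∀ y, χ y ∈ Set.Icc (0:ℝ) 1) → (∀ y, y ≤ -1 → χ y = 0) →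
        Measurable (Function.uncurry m) →
        (∀ y : ℝ, -1 ≤ y → ContDiff ℝ 1 (m y)) →
        (∀ y k : ℝ, -1 ≤ y →
          ‖m y k - 1‖ ≤ B * Real.sqrt (1 + y ^ 2) ^ (1 - γ) * (Real.sqrt (1 + k ^ 2))⁻¹) →
        (∀ y k : ℝ, -1 ≤ y →
          ‖deriv (m y) k‖ ≤ B * Real.sqrt (1 + y ^ 2) ^ (2 - γ) * (Real.sqrt (1 + k ^ 2))⁻¹) →
        ∀ φ : ℝ → ℂ, Integrable φ →
          ContDiff ℝ 1 (fun k : ℝ =>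
            ∫ y : ℝ, (starRingEnd ℂ) (m y k - 1) *
              Complex.exp (-(Complex.I * (y : ℂ) * (k : ℂ))) * (χ y : ℂ) * φ y) ∧
          (eLpNorm (fun k : ℝ =>
              ∫ y : ℝ, (starRingEnd ℂ) (m y k - 1) *
                Complex.exp (-(Complex.I * (y : ℂ) * (k : ℂ))) * (χ y : ℂ) * φ y) 2
              volume).toReal +
            (eLpNorm (deriv (fun k : ℝ =>
              ∫ y : ℝ, (starRingEnd ℂ) (m y k - 1) *
                Complex.exp (-(Complex.I * (y : ℂ) * (k : ℂ))) * (χ y : ℂ) * φ y)) 2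
              volume).toReal ≤
          C * B * ∫ y, ‖φ y‖ := by
  classical
  set K : ℝ := (eLpNorm KW 2 (volume : Measure ℝ)).toReal with hK_def
  have hK0 : 0 ≤ K := ENNReal.toReal_nonneg
  refine ⟨3 * K + 1, by positivity, ?_⟩
  intro B hB χ m hχmeas hχ01 hχ0 hm_meas hm_cd hm_b1 hm_b2 φ hφ
  have hFrw : (fun k : ℝ =>
      ∫ y : ℝ, (starRingEnd ℂ) (m y k - 1) *
        Complex.exp (-(Complex.I * (y : ℂ) * (k : ℂ))) * (χ y : ℂ) * φ y) =
      fun k : ℝ => ∫ y : ℝ, gker χ m φ k y := rfl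
  rw [hFrw]
  have hmc : ∀ c : ℝ, Measurable fun y => m y c := fun c =>
    hm_meas.comp (measurable_id.prodMk measurable_const)
  -- measurability in y
  have hg_meas : ∀ k : ℝ, AEStronglyMeasurable (fun y => gker χ m φ k y) volume := by
    intro k
    refine AEStronglyMeasurable.mul ?_ hφ.1
    apply Measurable.aestronglyMeasurable
    refine Measurable.mul (Measurable.mul ?_ ?_) ?_
    · exact continuous_star.measurable.comp ((hmc k).sub measurable_const)
    · exact Complex.measurable_exp.comp
        ((measurable_const.mul Complex.measurable_ofReal).mul measurable_const).neg
    · exact Complex.measurable_ofReal.comp hχmeas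
  have hg'_meas : ∀ k : ℝ, AEStronglyMeasurable (fun y => gker' χ m φ k y) volume := by
    intro k
    refine AEStronglyMeasurable.mul ?_ hφ.1
    apply Measurable.aestronglyMeasurable
    refine Measurable.mul (Measurable.mul ?_ ?_) ?_
    · refine Measurable.sub ?_ ?_
      · exact continuous_star.measurable.comp (measurable_Dm m hm_meas hm_cd k)
      · exact ((measurable_const.mul Complex.measurable_ofReal).mul
          (continuous_star.measurable.comp ((hmc k).sub measurable_const)))
    · exact Complex.measurable_exp.comp
        ((measurable_const.mul Complex.measurable_ofReal).mul measurable_const).neg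
    · exact Complex.measurable_ofReal.comp hχmeas
  -- pointwise bounds
  have hgb : ∀ k y : ℝ, ‖gker χ m φ k y‖ ≤ B * KW k * ‖φ y‖ := fun k y =>
    gker_norm_le γ B hγ hB χ m φ hχ01 hχ0 hm_b1 k y
  have hg'b : ∀ k y : ℝ, ‖gker' χ m φ k y‖ ≤ 2 * B * KW k * ‖φ y‖ := fun k y =>
    gker'_norm_le γ B hγ hB χ m φ hχ01 hχ0 hm_b1 hm_b2 k y
  have hg_unif : ∀ k y : ℝ, ‖gker χ m φ k y‖ ≤ B * ‖φ y‖ := fun k y =>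
    (hgb k y).trans (by nlinarith [KW_le_one k, KW_nonneg k, norm_nonneg (φ y), mul_nonneg hB (norm_nonneg (φ y))])
  have hg'_unif : ∀ k y : ℝ, ‖gker' χ m φ k y‖ ≤ 2 * B * ‖φ y‖ := fun k y =>
    (hg'b k y).trans (by nlinarith [KW_le_one k, KW_nonneg k, norm_nonneg (φ y), mul_nonneg hB (norm_nonneg (φ y))])
  -- integrability
  have hg_int : ∀ k : ℝ, Integrable (fun y => gker χ m φ k y) volume := by
    intro k
    refine Integrable.mono (hφ.norm.const_mul B) (hg_meas k) (ae_of_all _ fun y => ?_)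
    refine (hg_unif k y).trans ?_
    rw [Real.norm_eq_abs]
    exact le_abs_self _
  have hbound_int : Integrable (fun y => 2 * B * ‖φ y‖) volume := hφ.norm.const_mul (2 * B)
  -- differentiation under the integral sign
  have key : ∀ k₀ : ℝ, HasDerivAt (fun k : ℝ => ∫ y : ℝ, gker χ m φ k y)
      (∫ y : ℝ, gker' χ m φ k₀ y) k₀ := by
    intro k₀
    have := hasDerivAt_integral_of_dominated_loc_of_deriv_le
      (F := fun k y => gker χ m φ k y) (F' := fun k y => gker' χ m φ k y)
      (bound := fun y => 2 * B * ‖φ y‖) (Metric.ball_mem_nhds k₀ one_pos)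
      (Filter.Eventually.of_forall fun k => hg_meas k) (hg_int k₀) (hg'_meas k₀)
      (ae_of_all _ fun y k _ => hg'_unif k y) hbound_int
      (ae_of_all _ fun y k _ => gker_hasDerivAt χ m φ hχ0 hm_cd k y)
    exact this.2
  have hdiffF : Differentiable ℝ fun k : ℝ => ∫ y : ℝ, gker χ m φ k y := fun k =>
    (key k).differentiableAt
  have hderivF : deriv (fun k : ℝ => ∫ y : ℝ, gker χ m φ k y) =
      fun k : ℝ => ∫ y : ℝ, gker' χ m φ k y := funext fun k => (key k).deriv
  -- continuity of the derivative
  have hg'_contk : ∀ y : ℝ, Continuous fun k : ℝ => gker' χ m φ k y := by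
    intro y
    by_cases hy : -1 ≤ y
    · simp only [gker', if_pos hy]
      refine Continuous.mul (Continuous.mul (Continuous.mul ?_ ?_) continuous_const)
        continuous_const
      · refine Continuous.sub ?_ (continuous_const.mul ?_)
        · exact continuous_star.comp ((hm_cd y hy).continuous_deriv le_rfl)
        · exact continuous_star.comp (((hm_cd y hy).continuous).sub continuous_const)
      · exact Complex.continuous_exp.comp
          (continuous_const.mul Complex.continuous_ofReal).neg
    · have h0 : χ y = 0 := hχ0 y (le_of_lt (not_le.mp hy))
      have : (fun k : ℝ => gker' χ m φ k y) = fun _ => 0 := by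
        funext k; simp [gker', h0]
      rw [this]; exact continuous_const
  have hcontF' : Continuous fun k : ℝ => ∫ y : ℝ, gker' χ m φ k y := by
    refine continuous_of_dominated hg'_meas (fun k => ae_of_all _ fun y => hg'_unif k y)
      hbound_int (ae_of_all _ hg'_contk)
  constructor
  · exact contDiff_one_iff_deriv.mpr ⟨hdiffF, hderivF ▸ hcontF'⟩
  · -- the L² bounds
    have hφ1 : 0 ≤ ∫ y, ‖φ y‖ := integral_nonneg fun y => norm_nonneg _
    have hFb : ∀ k : ℝ, ‖∫ y : ℝ, gker χ m φ k y‖ ≤ (B * ∫ y, ‖φ y‖) * KW k := by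
      intro k
      refine (norm_integral_le_integral_norm _).trans ?_
      have h1 : ∫ y, ‖gker χ m φ k y‖ ≤ ∫ y, B * KW k * ‖φ y‖ := by
        refine integral_mono_of_nonneg (ae_of_all _ fun y => norm_nonneg _)
          (hφ.norm.const_mul (B * KW k)) (ae_of_all _ fun y => hgb k y)
      refine h1.trans ?_
      rw [integral_const_mul]
      exact le_of_eq (by ring)
    have hF'b : ∀ k : ℝ, ‖∫ y : ℝ, gker' χ m φ k y‖ ≤ (2 * (B * ∫ y, ‖φ y‖)) * KW k := by
      intro k
      refine (norm_integral_le_integral_norm _).trans ?_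
      have h1 : ∫ y, ‖gker' χ m φ k y‖ ≤ ∫ y, 2 * B * KW k * ‖φ y‖ := by
        refine integral_mono_of_nonneg (ae_of_all _ fun y => norm_nonneg _)
          (hφ.norm.const_mul (2 * B * KW k)) (ae_of_all _ fun y => hg'b k y)
      refine h1.trans ?_
      rw [integral_const_mul]
      exact le_of_eq (by ring)
    have e1 : (eLpNorm (fun k : ℝ => ∫ y : ℝ, gker χ m φ k y) 2 volume).toReal ≤
        (B * ∫ y, ‖φ y‖) * K :=
      l2_of_weight_bound _ _ (mul_nonneg hB hφ1) hFb
    have e2 : (eLpNorm (deriv fun k : ℝ => ∫ y : ℝ, gker χ m φ k y) 2 volume).toReal ≤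
        (2 * (B * ∫ y, ‖φ y‖)) * K := by
      rw [hderivF]
      exact l2_of_weight_bound _ _ (by positivity) hF'b
    have hBφ : 0 ≤ B * ∫ y, ‖φ y‖ := mul_nonneg hB hφ1
    calc (eLpNorm (fun k : ℝ => ∫ y : ℝ, gker χ m φ k y) 2 volume).toReal +
          (eLpNorm (deriv fun k : ℝ => ∫ y : ℝ, gker χ m φ k y) 2 volume).toReal ≤
        (B * ∫ y, ‖φ y‖) * K + (2 * (B * ∫ y, ‖φ y‖)) * K := add_le_add e1 e2
      _ ≤ (3 * K + 1) * B * ∫ y, ‖φ y‖ := by nlinarith
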